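/- arXiv:1606.03520 — 2 statements merged into one kernel-verified Lean document; each statement's English description precedes it below -/
import Mathlib

section
/- Let T be a bounded holomorphic function on the right half-plane that factors as T = T_mp · T_ap where T_ap(s) = ((s - q)/(s + q))·e^{-τ s} with q > 0, τ ≥ 0, and T_mp bounded holomorphic on the right half-plane. If T(p) = 1 for some real p > 0 with p ≠ q, then ‖T‖_∞ ≥ ((p + q)/|p - q|)·e^{τ p}. -/
/-!
Away from the boundary the all-pass factor is bounded below: on the line `Re s = δ` with
`0 < δ < q` one has `|(s - q)/(s + q)| ≥ (q - δ)/(q + δ)` and `|e^{-τs}| = e^{-τδ}`, so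
`|T_mp| ≤ ‖T‖_∞ (q + δ)/(q - δ) e^{τδ}` there. Phragmén–Lindelöf carries this bound to the
half-plane `Re s ≥ δ`, and letting `δ → 0` gives `|T_mp(p)| ≤ ‖T‖_∞`. Evaluating the
factorisation at `p` turns `T(p) = 1` into `|T_mp(p)| = ((p + q)/|p - q|) e^{τp}`.
-/

open Filter Topology Complex

theorem div_le_norm_sub_div_add {q : ℝ} (hq : 0 < q) {z : ℂ} (hz : 0 ≤ z.re) :
    (q - z.re) / (q + z.re) ≤ ‖(z - q) / (z + q)‖ := by
  have hzq : z + q ≠ 0 := fun h => by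
    have := congrArg re h
    simp only [add_re, ofReal_re, zero_re] at this; linarith
  rw [norm_div, div_le_div_iff₀ (by linarith) (norm_pos_iff.mpr hzq)]
  refine le_of_sq_le_sq ?_ (by positivity)
  simp only [mul_pow, Complex.sq_norm, normSq_apply, sub_re, add_re, sub_im, add_im, ofReal_re,
    ofReal_im]
  nlinarith [mul_nonneg (mul_nonneg hq.le hz) (sq_nonneg z.im)]

theorem norm_sub_div_add_ofReal {p q : ℝ} (hpq : 0 < p + q) :
    ‖((p : ℂ) - q) / (p + q)‖ = |p - q| / (p + q) := by
  rw [← ofReal_sub, ← ofReal_add, ← ofReal_div, norm_real, Real.norm_eq_abs, abs_div,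
    abs_of_pos hpq]

theorem norm_le_of_norm_le_on_vertical_line {E : Type*} [NormedAddCommGroup E] [NormedSpace ℂ E]
    {f : ℂ → E} {a b C B : ℝ} (hd : DifferentiableOn ℂ f {s | a < s.re})
    (hb : ∀ s : ℂ, a < s.re → ‖f s‖ ≤ C) (hab : a < b) (hline : ∀ z : ℂ, z.re = b → ‖f z‖ ≤ B)
    {s : ℂ} (hs : b ≤ s.re) : ‖f s‖ ≤ B := by
  set g : ℂ → E := fun z => f (z + b)
  have hg_bdd : ∀ z : ℂ, 0 ≤ z.re → ‖g z‖ ≤ C := fun z hz =>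
    hb _ (by simp only [add_re, ofReal_re]; linarith)
  have hg_diff : DiffContOnCl ℂ g {z | 0 < z.re} := by
    refine DifferentiableOn.diffContOnCl ?_
    rw [closure_setOfPred_lt_re]
    exact hd.comp (differentiable_id.add_const _).differentiableOn fun z hz => by
      simp only [Set.mem_ofPred_eq, add_re, ofReal_re] at hz ⊢; linarith
  have := PhragmenLindelof.right_half_plane_of_bounded_on_real hg_diff
    ⟨1, one_lt_two, 0, ?_⟩ ?_ (fun y => hline _ (by simp)) (z := s - b) (by simpa using hs)
  · simpa [g] using this
  · refine Asymptotics.IsBigO.of_bound C ?_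
    filter_upwards [mem_inf_of_right (mem_principal_self _)] with z hz
    simpa using hg_bdd z (le_of_lt hz)
  · exact isBoundedUnder_of_eventually_le (a := C)
      ((eventually_ge_atTop 0).mono fun x hx => hg_bdd _ (by simpa using hx))

theorem norm_le_of_norm_mul_allpass_le {f : ℂ → ℂ} {q τ C B : ℝ} (hq : 0 < q)
    (hd : DifferentiableOn ℂ f {s | 0 < s.re}) (hb : ∀ s : ℂ, 0 < s.re → ‖f s‖ ≤ C)
    (hB : ∀ s : ℂ, 0 < s.re → ‖f s * ((s - q) / (s + q)) * exp (-τ * s)‖ ≤ B)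
    {s : ℂ} (hs : 0 < s.re) : ‖f s‖ ≤ B := by
  set c : ℝ → ℝ := fun δ => (q - δ) / (q + δ) * Real.exp (-τ * δ)
  have hc_lim : Tendsto c (𝓝[>] 0) (𝓝 1) := by
    refine tendsto_nhdsWithin_of_tendsto_nhds ?_
    have : ContinuousAt c 0 := by
      refine ContinuousAt.mul (.div (by fun_prop) (by fun_prop) ?_) (by fun_prop)
      simpa using hq.ne'
    simpa [c, hq.ne'] using this.tendsto
  have hstep : ∀ δ ∈ Set.Ioo 0 (min q s.re), c δ * ‖f s‖ ≤ B := by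
    rintro δ ⟨hδ, hδ'⟩
    have hc : 0 < c δ :=
      mul_pos (div_pos (by linarith [min_le_left q s.re]) (by linarith)) (Real.exp_pos _)
    have hline : ∀ z : ℂ, z.re = δ → ‖f z‖ ≤ B / c δ := by
      intro z hz
      rw [le_div_iff₀ hc]
      calc ‖f z‖ * ((q - δ) / (q + δ) * Real.exp (-τ * δ))
          ≤ ‖f z‖ * (‖(z - q) / (z + q)‖ * ‖exp (-τ * z)‖) := by
            gcongr
            · rw [← hz]; exact div_le_norm_sub_div_add hq (hz ▸ hδ.le)
            · simp [Complex.norm_exp, hz]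
        _ = ‖f z * ((z - q) / (z + q)) * exp (-τ * z)‖ := by simp only [norm_mul, mul_assoc]
        _ ≤ B := hB z (hz ▸ hδ)
    rw [← le_div_iff₀' hc]
    exact norm_le_of_norm_le_on_vertical_line hd hb hδ hline (by linarith [min_le_right q s.re])
  have := (hc_lim.mul_const ‖f s‖)
  rw [one_mul] at this
  exact le_of_tendsto this (mem_of_superset (Ioo_mem_nhdsGT (lt_min hq hs)) hstep)

open Complex in
theorem hinf_lower_bound_rhp_zero_general (T Tmp : ℂ → ℂ) (p q τ : ℝ)
    (hp : 0 < p) (hq : 0 < q)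
    (hTb : ∃ C : ℝ, ∀ s : ℂ, 0 < s.re → ‖T s‖ ≤ C)
    (hmpd : DifferentiableOn ℂ Tmp {s : ℂ | 0 < s.re})
    (hmpb : ∃ C : ℝ, ∀ s : ℂ, 0 < s.re → ‖Tmp s‖ ≤ C)
    (hfac : ∀ s : ℂ, 0 < s.re →
      T s = Tmp s * ((s - ↑q) / (s + ↑q)) * Complex.exp (-↑τ * s))
    (hTp : T ↑p = 1) :
    (p + q) / |p - q| * Real.exp (τ * p) ≤ ⨆ s : {s : ℂ // 0 < s.re}, ‖T (s : ℂ)‖ := by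
  obtain ⟨C, hC⟩ := hTb
  obtain ⟨C', hC'⟩ := hmpb
  have hT_le (s : ℂ) (hs : 0 < s.re) : ‖T s‖ ≤ ⨆ s : {s : ℂ // 0 < s.re}, ‖T (s : ℂ)‖ :=
    le_ciSup (f := fun s : {s : ℂ // 0 < s.re} => ‖T s‖) ⟨C, by rintro _ ⟨s, rfl⟩; exact hC s s.2⟩
      ⟨s, hs⟩
  have hp' : 0 < (p : ℂ).re := by simpa
  have hTmp_le :=
    norm_le_of_norm_mul_allpass_le hq hmpd hC' (fun s hs => hfac s hs ▸ hT_le s hs) hp'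
  have hTmp_p : ‖Tmp p‖ * (|p - q| / (p + q)) = Real.exp (τ * p) := by
    have h := congrArg norm (hfac p hp')
    have hre : (-(τ : ℂ) * p).re = -(τ * p) := by simp
    rw [hTp, norm_one, norm_mul, norm_mul, norm_sub_div_add_ofReal (by linarith), norm_exp, hre,
      Real.exp_neg] at h
    exact (mul_inv_eq_one₀ (Real.exp_pos _).ne').mp h.symm
  calc (p + q) / |p - q| * Real.exp (τ * p)
      = (|p - q| / (p + q))⁻¹ * (|p - q| / (p + q)) * ‖Tmp p‖ := by rw [← hTmp_p, inv_div]; ring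
    _ ≤ ‖Tmp p‖ := mul_le_of_le_one_left (norm_nonneg _) inv_mul_le_one
    _ ≤ _ := hTmp_le

open Complex in
/-- Fragility bound with an RHP zero: if `T = T_mp · ((s−q)/(s+q))e^{−τs}` on the right
half-plane, with `T_mp` bounded holomorphic, and `T(p) = 1` at a real `p > 0`, `p ≠ q`,
then `‖T‖_∞ ≥ ((p+q)/|p−q|)·e^{τp}`. -/
theorem hinf_lower_bound_rhp_zero (T Tmp : ℂ → ℂ) (p q τ : ℝ)
    (hp : 0 < p) (hq : 0 < q) (hpq : p ≠ q) (hτ : 0 ≤ τ)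
    (hTd : DifferentiableOn ℂ T {s : ℂ | 0 < s.re})
    (hTb : ∃ C : ℝ, ∀ s : ℂ, 0 < s.re → ‖T s‖ ≤ C)
    (hmpd : DifferentiableOn ℂ Tmp {s : ℂ | 0 < s.re})
    (hmpb : ∃ C : ℝ, ∀ s : ℂ, 0 < s.re → ‖Tmp s‖ ≤ C)
    (hfac : ∀ s : ℂ, 0 < s.re →
      T s = Tmp s * ((s - ↑q) / (s + ↑q)) * Complex.exp (-↑τ * s))
    (hTp : T ↑p = 1) :
    (p + q) / |p - q| * Real.exp (τ * p) ≤ ⨆ s : {s : ℂ // 0 < s.re}, ‖T (s : ℂ)‖ :=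
  hinf_lower_bound_rhp_zero_general T Tmp p q τ hp hq hTb hmpd hmpb hfac hTp
end

section
/- Let T be a bounded holomorphic function on the right half-plane that factors as T = T_mp · e^{-τ s} with τ ≥ 0 and T_mp bounded holomorphic. If T(p) = 1 for some real p > 0, then ‖T‖_∞ ≥ e^{τ p}. -/
/-!
Write `M = ‖T‖_∞`. On the vertical line `Re s = ε` the factorisation gives
`‖Tmp s‖ = ‖T s‖ e^{τε} ≤ M e^{τε}`. Since `Tmp` is bounded, the Phragmén–Lindelöf principle on the
half-plane `Re s ≥ ε` propagates this bound to `s = p`, where `‖Tmp p‖ = e^{τp}` because `T p = 1`.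
Letting `ε → 0` gives `e^{τp} ≤ M`.
-/

open Complex Filter Topology

theorem Complex.norm_le_of_bounded_of_norm_le_on_vertical_line {E : Type*}
    [NormedAddCommGroup E] [NormedSpace ℂ E] {f : ℂ → E} {a C : ℝ}
    (hd : DifferentiableOn ℂ f {s | 0 < s.re}) (hb : ∃ B, ∀ s : ℂ, 0 < s.re → ‖f s‖ ≤ B)
    (ha : 0 < a) (hline : ∀ y : ℝ, ‖f (a + y * I)‖ ≤ C) {s : ℂ} (hs : a ≤ s.re) :
    ‖f s‖ ≤ C := by
  obtain ⟨B, hB⟩ := hb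
  have hshift : ∀ z : ℂ, 0 ≤ z.re → 0 < (z + a).re := fun z hz => by
    simp only [add_re, ofReal_re]; linarith
  have hg : DiffContOnCl ℂ (fun z => f (z + a)) {z | 0 < z.re} := by
    refine DifferentiableOn.diffContOnCl ?_
    rw [closure_setOfPred_lt_re]
    exact hd.comp (differentiableOn_id.add_const _) fun z hz => hshift z hz
  have hgB : ∀ z : ℂ, 0 ≤ z.re → ‖f (z + a)‖ ≤ B := fun z hz => hB _ (hshift z hz)
  have := PhragmenLindelof.right_half_plane_of_bounded_on_real (C := C) (z := s - a) hg
    ⟨1, one_lt_two, 0, Asymptotics.IsBigO.of_bound B <| eventually_inf_principal.2 <|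
      Eventually.of_forall fun z hz => by simpa using hgB z (le_of_lt hz)⟩
    ⟨B, eventually_map.2 <| eventually_atTop.2 ⟨0, fun x hx => hgB x (by simpa using hx)⟩⟩
    (fun y => by simpa [add_comm] using hline y) (by simpa using hs)
  simpa using this

open Complex in
theorem hinf_lower_bound_delay_general (T Tmp : ℂ → ℂ) (p τ : ℝ) (hp : 0 < p)
    (hTb : ∃ C : ℝ, ∀ s : ℂ, 0 < s.re → ‖T s‖ ≤ C)
    (hmpd : DifferentiableOn ℂ Tmp {s : ℂ | 0 < s.re})
    (hmpb : ∃ C : ℝ, ∀ s : ℂ, 0 < s.re → ‖Tmp s‖ ≤ C)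
    (hfac : ∀ s : ℂ, 0 < s.re → T s = Tmp s * Complex.exp (-↑τ * s))
    (hTp : T ↑p = 1) :
    Real.exp (τ * p) ≤ ⨆ s : {s : ℂ // 0 < s.re}, ‖T (s : ℂ)‖ := by
  set M := ⨆ s : {s : ℂ // 0 < s.re}, ‖T (s : ℂ)‖
  have hM : ∀ s : ℂ, 0 < s.re → ‖T s‖ ≤ M := by
    obtain ⟨C, hC⟩ := hTb
    exact fun s hs => le_ciSup (f := fun s : {s : ℂ // 0 < s.re} => ‖T s‖)
      ⟨C, Set.forall_mem_range.2 fun s => hC s s.2⟩ ⟨s, hs⟩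
  have hnorm : ∀ s : ℂ, 0 < s.re → ‖Tmp s‖ = ‖T s‖ * Real.exp (τ * s.re) := fun s hs => by
    rw [hfac s hs, norm_mul, norm_exp, mul_assoc, ← Real.exp_add]
    simp
  have hTmp_p : ‖Tmp p‖ = Real.exp (τ * p) := by
    simpa [hTp] using hnorm p (by simpa using hp)
  have hε : ∀ ε ∈ Set.Ioo 0 p, Real.exp (τ * p) ≤ M * Real.exp (τ * ε) := fun ε hε => by
    rw [← hTmp_p]
    refine Complex.norm_le_of_bounded_of_norm_le_on_vertical_line hmpd hmpb hε.1
      (fun y => ?_) (by simpa using hε.2.le)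
    have hre : 0 < ((ε : ℂ) + y * I).re := by simpa using hε.1
    rw [hnorm _ hre]
    simpa using mul_le_mul_of_nonneg_right (hM _ hre) (Real.exp_nonneg (τ * ε))
  have hlim : Tendsto (fun ε => M * Real.exp (τ * ε)) (𝓝[>] 0) (𝓝 M) := by
    refine (Continuous.tendsto' ?_ 0 M ?_).mono_left nhdsWithin_le_nhds
    · fun_prop
    · simp
  exact ge_of_tendsto hlim (eventually_of_mem (Ioo_mem_nhdsGT hp) hε)

open Complex in
/-- Fragility bound without an RHP zero: if `T = T_mp · e^{−τs}` on the right half-plane,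
with `T_mp` bounded holomorphic, and `T(p) = 1` at a real `p > 0`, then `‖T‖_∞ ≥ e^{τp}`. -/
theorem hinf_lower_bound_delay (T Tmp : ℂ → ℂ) (p τ : ℝ) (hp : 0 < p) (hτ : 0 ≤ τ)
    (hTd : DifferentiableOn ℂ T {s : ℂ | 0 < s.re})
    (hTb : ∃ C : ℝ, ∀ s : ℂ, 0 < s.re → ‖T s‖ ≤ C)
    (hmpd : DifferentiableOn ℂ Tmp {s : ℂ | 0 < s.re})
    (hmpb : ∃ C : ℝ, ∀ s : ℂ, 0 < s.re → ‖Tmp s‖ ≤ C)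
    (hfac : ∀ s : ℂ, 0 < s.re → T s = Tmp s * Complex.exp (-↑τ * s))
    (hTp : T ↑p = 1) :
    Real.exp (τ * p) ≤ ⨆ s : {s : ℂ // 0 < s.re}, ‖T (s : ℂ)‖ :=
  hinf_lower_bound_delay_general T Tmp p τ hp hTb hmpd hmpb hfac hTp
end
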